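/- For every social network model SN (whose knowledge bases satisfy knowledge consistency and self-awareness), the characteristic formula φ_SN is KD4-consistent, i.e., ¬φ_SN is not KD4-derivable from no assumptions. -/
import Mathlib


/-- KBL formulas: atomic predicates (predicate symbol applied to terms of the
finite domain, folded into the type `Pred`), connection atoms, action atoms,
negation, conjunction and knowledge modalities. -/
inductive Formula (Ag Pred Conn Act : Type) : Type
  | atom : Pred → Formula Ag Pred Conn Act
  | conn : Conn → Ag → Ag → Formula Ag Pred Conn Act
  | act  : Act → Ag → Ag → Formula Ag Pred Conn Act
  | neg  : Formula Ag Pred Conn Act → Formula Ag Pred Conn Act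
  | and  : Formula Ag Pred Conn Act → Formula Ag Pred Conn Act → Formula Ag Pred Conn Act
  | know : Ag → Formula Ag Pred Conn Act → Formula Ag Pred Conn Act
  deriving DecidableEq

variable {Ag Pred Conn Act : Type}

/-- Material implication, encoded classically. -/
def Formula.imp (φ ψ : Formula Ag Pred Conn Act) : Formula Ag Pred Conn Act :=
  Formula.neg (Formula.and φ (Formula.neg ψ))

/-- Propositional formulas, used to define substitution instances of
propositional tautologies (axiom A1). -/
inductive PropForm : Type
  | var : ℕ → PropForm
  | neg : PropForm → PropForm
  | and : PropForm → PropForm → PropForm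

def PropForm.eval (v : ℕ → Bool) : PropForm → Bool
  | .var n => v n
  | .neg p => !(p.eval v)
  | .and p q => p.eval v && q.eval v

/-- A propositional tautology. -/
def PropForm.Taut (p : PropForm) : Prop := ∀ v, p.eval v = true

def PropForm.subst (σ : ℕ → Formula Ag Pred Conn Act) : PropForm → Formula Ag Pred Conn Act
  | .var n => σ n
  | .neg p => Formula.neg (p.subst σ)
  | .and p q => Formula.and (p.subst σ) (q.subst σ)

/-- A KBL formula that is a substitution instance of a propositional tautology. -/
def Formula.IsTautInstance (φ : Formula Ag Pred Conn Act) : Prop :=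
  ∃ (p : PropForm) (σ : ℕ → Formula Ag Pred Conn Act), p.Taut ∧ p.subst σ = φ

/-- KD4-derivability `Γ ⊢ φ`: assumptions, propositional tautologies (A1),
distribution (A2), positive introspection (A4), consistency (D, with falsum
taken as a contradictory formula `φ ∧ ¬φ`), modus ponens (R1) and
necessitation from the empty set of assumptions (R2). -/
inductive Deriv : Set (Formula Ag Pred Conn Act) → Formula Ag Pred Conn Act → Prop
  | mem {Γ} {φ : Formula Ag Pred Conn Act} : φ ∈ Γ → Deriv Γ φ
  | taut {Γ} {φ : Formula Ag Pred Conn Act} : φ.IsTautInstance → Deriv Γ φ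
  | a2 (Γ) (i : Ag) (φ ψ : Formula Ag Pred Conn Act) :
      Deriv Γ (Formula.imp
        (Formula.and (Formula.know i φ) (Formula.know i (Formula.imp φ ψ)))
        (Formula.know i ψ))
  | a4 (Γ) (i : Ag) (φ : Formula Ag Pred Conn Act) :
      Deriv Γ (Formula.imp (Formula.know i φ) (Formula.know i (Formula.know i φ)))
  | dax (Γ) (i : Ag) (φ : Formula Ag Pred Conn Act) :
      Deriv Γ (Formula.neg (Formula.know i (Formula.and φ (Formula.neg φ))))
  | mp {Γ} {φ ψ : Formula Ag Pred Conn Act} :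
      Deriv Γ (Formula.imp φ ψ) → Deriv Γ φ → Deriv Γ ψ
  | nec (Γ) (i : Ag) {φ : Formula Ag Pred Conn Act} :
      Deriv (∅ : Set (Formula Ag Pred Conn Act)) φ → Deriv Γ (Formula.know i φ)

/-- A social network model: connection relations, permitted-action relations,
a finite knowledge base for every agent, and the environment's knowledge base
(the set of true atomic predicates). -/
structure SNM (Ag Pred Conn Act : Type) where
  conn : Conn → Ag → Ag → Prop
  act : Act → Ag → Ag → Prop
  KB : Ag → Finset (Formula Ag Pred Conn Act)
  KBe : Finset Pred

/-- Satisfaction of a KBL formula in a social network model. -/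
def SNM.Sat (SN : SNM Ag Pred Conn Act) : Formula Ag Pred Conn Act → Prop
  | .atom p => p ∈ SN.KBe
  | .conn m i j => SN.conn m i j
  | .act n i j => SN.act n i j
  | .neg φ => ¬ SN.Sat φ
  | .and φ ψ => SN.Sat φ ∧ SN.Sat ψ
  | .know i φ => Deriv (↑(SN.KB i) : Set (Formula Ag Pred Conn Act)) φ

/-- Knowledge consistency of the knowledge bases of an SNM. -/
def SNM.KnowConsistent (SN : SNM Ag Pred Conn Act) : Prop :=
  ∀ (i : Ag) (φ : Formula Ag Pred Conn Act),
    Deriv (↑(SN.KB i) : Set (Formula Ag Pred Conn Act)) φ →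
    ¬ Deriv (↑(SN.KB i) : Set (Formula Ag Pred Conn Act)) (Formula.neg φ)

/-- Self-awareness of the knowledge bases of an SNM. -/
def SNM.SelfAware (SN : SNM Ag Pred Conn Act) : Prop :=
  ∀ (i : Ag) (φ : Formula Ag Pred Conn Act),
    Deriv (↑(SN.KB i) : Set (Formula Ag Pred Conn Act)) φ →
    Deriv (↑(SN.KB i) : Set (Formula Ag Pred Conn Act)) (Formula.know i φ)

/-- Conjunction of a nonempty list of formulas (head `a`, tail `l`). -/
def conjNE (a : Formula Ag Pred Conn Act) (l : List (Formula Ag Pred Conn Act)) :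
    Formula Ag Pred Conn Act :=
  l.foldl Formula.and a

/-- The characteristic set `Φ_SN` of a social network model. -/
def SNM.CharSet (SN : SNM Ag Pred Conn Act) : Set (Formula Ag Pred Conn Act) :=
  {ψ | ∃ p ∈ SN.KBe, ψ = Formula.atom p} ∪
  {ψ | ∃ (i : Ag) (φ : Formula Ag Pred Conn Act), φ ∈ SN.KB i ∧ ψ = Formula.know i φ} ∪
  {ψ | ∃ (m : Conn) (i j : Ag), SN.conn m i j ∧ ψ = Formula.conn m i j} ∪
  {ψ | ∃ (n : Act) (i j : Ag), SN.act n i j ∧ ψ = Formula.act n i j}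

/-- A formula is KD4-consistent when its negation is not derivable from no
assumptions. -/
def KD4Consistent (φ : Formula Ag Pred Conn Act) : Prop :=
  ¬ Deriv (∅ : Set (Formula Ag Pred Conn Act)) (Formula.neg φ)

/-- A set of formulas is KD4-consistent when no contradiction is derivable from it. -/
def SetKD4Consistent (Γ : Set (Formula Ag Pred Conn Act)) : Prop :=
  ∀ ψ : Formula Ag Pred Conn Act, ¬ (Deriv Γ ψ ∧ Deriv Γ (Formula.neg ψ))

/-- Subformulas of a formula (including the formula itself). -/
def Formula.sub : Formula Ag Pred Conn Act → Set (Formula Ag Pred Conn Act)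
  | .atom p => {Formula.atom p}
  | .conn m i j => {Formula.conn m i j}
  | .act n i j => {Formula.act n i j}
  | .neg φ => insert (Formula.neg φ) φ.sub
  | .and φ ψ => insert (Formula.and φ ψ) (φ.sub ∪ ψ.sub)
  | .know i φ => insert (Formula.know i φ) φ.sub

/-- `Sub⁺(φ)`: subformulas of `φ` together with their negations. -/
def SubPlus (φ : Formula Ag Pred Conn Act) : Set (Formula Ag Pred Conn Act) :=
  φ.sub ∪ (Formula.neg '' φ.sub)

/-- `Con(φ)` (named `ConKD4`): maximal KD4-consistent subsets of `Sub⁺(φ)`. -/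
def ConKD4 (φ : Formula Ag Pred Conn Act) : Set (Set (Formula Ag Pred Conn Act)) :=
  {Θ | Θ ⊆ SubPlus φ ∧ SetKD4Consistent Θ ∧
    ∀ ψ ∈ SubPlus φ, ψ ∉ Θ → ¬ SetKD4Consistent (insert ψ Θ)}

/-- `Θ/K_i = {ψ | K_i ψ ∈ Θ}`. -/
def projK (i : Ag) (Θ : Set (Formula Ag Pred Conn Act)) : Set (Formula Ag Pred Conn Act) :=
  {ψ | Formula.know i ψ ∈ Θ}

/-- Kripke models: states, a valuation assigning truth values of atomic
formulas at each state, and accessibility relations. -/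
structure Kripke (Ag Pred Conn Act : Type) where
  State : Type
  val : State → Formula Ag Pred Conn Act → Prop
  acc : Ag → State → State → Prop

/-- The canonical Kripke model `M_φ` of a (KD4-consistent) formula `φ`. -/
def canonical (φ : Formula Ag Pred Conn Act) : Kripke Ag Pred Conn Act where
  State := {Θ : Set (Formula Ag Pred Conn Act) // Θ ∈ ConKD4 φ}
  val := fun s ψ => ψ ∈ s.1
  acc := fun i s t => projK i s.1 ⊆ projK i t.1 ∧ projK i s.1 ⊆ t.1

/-- Satisfaction of a formula at a state of a Kripke model. -/
def KSat (M : Kripke Ag Pred Conn Act) : M.State → Formula Ag Pred Conn Act → Prop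
  | s, .atom p => M.val s (Formula.atom p)
  | s, .conn m i j => M.val s (Formula.conn m i j)
  | s, .act n i j => M.val s (Formula.act n i j)
  | s, .neg ψ => ¬ KSat M s ψ
  | s, .and ψ χ => KSat M s ψ ∧ KSat M s χ
  | s, .know i ψ => ∀ t, M.acc i s t → KSat M t ψ

/-- Length (number of symbols) of a formula; atoms count as one symbol. -/
def Formula.len : Formula Ag Pred Conn Act → ℕ
  | .atom _ => 1
  | .conn _ _ _ => 1
  | .act _ _ _ => 1
  | .neg φ => φ.len + 1
  | .and φ ψ => φ.len + ψ.len + 1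
  | .know _ φ => φ.len + 1

/-- `outerK(φ)`: the subformulas of `φ` of the form `K_i ψ` that are not under
the scope of any knowledge modality. -/
def outerK : Formula Ag Pred Conn Act → List (Formula Ag Pred Conn Act)
  | .neg φ => outerK φ
  | .and φ ψ => outerK φ ++ outerK ψ
  | .know i φ => [Formula.know i φ]
  | .atom _ => []
  | .conn _ _ _ => []
  | .act _ _ _ => []

/-- The length of the conjunction of the formulas of a list: the lengths of
the conjuncts plus one symbol for each `∧`. -/
def conjLen (l : List (Formula Ag Pred Conn Act)) : ℕ :=
  (l.map Formula.len).sum + (l.length - 1)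

section Aux

variable {Ag Pred Conn Act : Type}

/-- Monotonicity of derivability. -/
lemma Deriv.mono {Γ Δ : Set (Formula Ag Pred Conn Act)} {φ : Formula Ag Pred Conn Act}
    (h : Deriv Γ φ) (hs : Γ ⊆ Δ) : Deriv Δ φ := by
  induction h generalizing Δ with
  | mem h => exact .mem (hs h)
  | taut h => exact .taut h
  | a2 Γ i φ ψ => exact .a2 _ i φ ψ
  | a4 Γ i φ => exact .a4 _ i φ
  | dax Γ i φ => exact .dax _ i φ
  | mp h1 h2 ih1 ih2 => exact .mp (ih1 hs) (ih2 hs)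
  | nec Γ i h ih => exact .nec _ i h

def pimp (p q : PropForm) : PropForm := .neg (.and p (.neg q))

lemma tautInstance_and_left (φ ψ : Formula Ag Pred Conn Act) :
    (Formula.imp (Formula.and φ ψ) φ).IsTautInstance :=
  ⟨pimp (.and (.var 0) (.var 1)) (.var 0),
   fun n => if n = 0 then φ else ψ,
   by intro v; simp only [pimp, PropForm.eval]; cases v 0 <;> cases v 1 <;> rfl,
   rfl⟩

lemma tautInstance_and_right (φ ψ : Formula Ag Pred Conn Act) :
    (Formula.imp (Formula.and φ ψ) ψ).IsTautInstance :=
  ⟨pimp (.and (.var 0) (.var 1)) (.var 1),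
   fun n => if n = 0 then φ else ψ,
   by intro v; simp only [pimp, PropForm.eval]; cases v 0 <;> cases v 1 <;> rfl,
   rfl⟩

lemma sat_imp (SN : SNM Ag Pred Conn Act) (φ ψ : Formula Ag Pred Conn Act) :
    SN.Sat (Formula.imp φ ψ) ↔ (SN.Sat φ → SN.Sat ψ) := by
  simp only [Formula.imp, SNM.Sat]
  tauto

lemma sat_taut (SN : SNM Ag Pred Conn Act) {φ : Formula Ag Pred Conn Act}
    (h : φ.IsTautInstance) : SN.Sat φ := by
  classical
  obtain ⟨p, σ, hp, rfl⟩ := h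
  have key : ∀ q : PropForm,
      SN.Sat (q.subst σ) ↔ q.eval (fun n => decide (SN.Sat (σ n))) = true := by
    intro q
    induction q with
    | var n => simp [PropForm.subst, PropForm.eval]
    | neg q ih => simp [PropForm.subst, PropForm.eval, SNM.Sat, ih]
    | and q r ih1 ih2 => simp [PropForm.subst, PropForm.eval, SNM.Sat, ih1, ih2]
  exact (key p).mpr (hp _)

/-- Soundness of KD4 derivability w.r.t. satisfaction in an SNM that is
knowledge-consistent and self-aware. -/
lemma deriv_sound (SN : SNM Ag Pred Conn Act)
    (hcons : SN.KnowConsistent) (hself : SN.SelfAware)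
    {Γ : Set (Formula Ag Pred Conn Act)} {φ : Formula Ag Pred Conn Act}
    (h : Deriv Γ φ) (hΓ : ∀ ψ ∈ Γ, SN.Sat ψ) : SN.Sat φ := by
  induction h with
  | mem h => exact hΓ _ h
  | taut h => exact sat_taut SN h
  | a2 Γ i φ ψ =>
      rw [sat_imp]
      rintro ⟨h1, h2⟩
      exact Deriv.mp h2 h1
  | a4 Γ i φ =>
      rw [sat_imp]
      intro h
      exact hself i φ h
  | dax Γ i φ =>
      intro h
      have h1 : Deriv (↑(SN.KB i) : Set (Formula Ag Pred Conn Act)) φ :=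
        Deriv.mp (Deriv.taut (tautInstance_and_left φ (Formula.neg φ))) h
      have h2 : Deriv (↑(SN.KB i) : Set (Formula Ag Pred Conn Act)) (Formula.neg φ) :=
        Deriv.mp (Deriv.taut (tautInstance_and_right φ (Formula.neg φ))) h
      exact hcons i φ h1 h2
  | mp h1 h2 ih1 ih2 => exact (sat_imp SN _ _).mp (ih1 hΓ) (ih2 hΓ)
  | nec Γ i h ih => exact Deriv.mono h (Set.empty_subset _)

lemma sat_charset (SN : SNM Ag Pred Conn Act) {ψ : Formula Ag Pred Conn Act}
    (hψ : ψ ∈ SN.CharSet) : SN.Sat ψ := by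
  rcases hψ with ((⟨p, hp, rfl⟩ | ⟨i, φ, hφ, rfl⟩) | ⟨m, i, j, h, rfl⟩) | ⟨n, i, j, h, rfl⟩
  · exact hp
  · exact Deriv.mem (Finset.mem_coe.mpr hφ)
  · exact h
  · exact h

lemma sat_conjNE (SN : SNM Ag Pred Conn Act) :
    ∀ (l : List (Formula Ag Pred Conn Act)) (a : Formula Ag Pred Conn Act),
      (∀ ψ ∈ a :: l, SN.Sat ψ) → SN.Sat (conjNE a l) := by
  intro l
  induction l with
  | nil => intro a h; exact h a (by simp)
  | cons b t ih =>
      intro a h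
      have : conjNE a (b :: t) = conjNE (Formula.and a b) t := rfl
      rw [this]
      apply ih
      intro ψ hψ
      rcases List.mem_cons.mp hψ with rfl | hψ
      · exact ⟨h a (by simp), h b (by simp)⟩
      · exact h ψ (by simp [hψ])

end Aux

/-- for every SNM whose knowledge bases are knowledge-consistent
and self-aware, the characteristic formula `φ_SN` (the conjunction of any
duplicate-free enumeration `a :: l` of the characteristic set `Φ_SN`) is
KD4-consistent. -/
theorem characteristic_formula_consistent
    {Ag Pred Conn Act : Type} [Fintype Ag] [Fintype Conn] [Fintype Act]
    (SN : SNM Ag Pred Conn Act)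
    (hcons : SN.KnowConsistent) (hself : SN.SelfAware)
    (a : Formula Ag Pred Conn Act) (l : List (Formula Ag Pred Conn Act))
    (hnd : (a :: l).Nodup)
    (henum : ∀ ψ : Formula Ag Pred Conn Act, ψ ∈ a :: l ↔ ψ ∈ SN.CharSet) :
    KD4Consistent (conjNE a l) := by
  intro hder
  have hs := deriv_sound SN hcons hself hder (fun ψ hψ => absurd hψ (Set.notMem_empty ψ))
  exact hs (sat_conjNE SN l a (fun ψ hψ => sat_charset SN ((henum ψ).mp hψ)))
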